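/- If i : C → D is a G-equivariant Dwyer map and S is any small G-category, then S × i : S × C → S × D is a G-equivariant Dwyer map. -/

import Mathlib

/-! Everything is componentwise. Products of sieves, of cosieves, of adjunctions and of
equivariant natural transformations are again such, and `𝟭 S` with the identity adjunction is
all of these; so the factorization `i = f ⋙ j` with adjunction `f ⊣ r` yields
`𝟭 S × i = (𝟭 S × f) ⋙ (𝟭 S × j)` with `𝟭 S × f ⊣ 𝟭 S × r`, equivariant for the diagonal
actions. -/

open CategoryTheory

universe u

namespace GGlobal

/-- A strict action of a group (or monoid) `G` on a category `C`, given by a monoid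
homomorphism into the endomorphism monoid of `C` in `Cat`. -/
abbrev GAct (G : Type u) [Monoid G] (C : Type u) [Category.{u} C] : Type u :=
  G →* CategoryTheory.End (Cat.of C)

variable {G : Type u} [Group G] {C D : Type u} [Category.{u} C] [Category.{u} D]

/-- A functor is strictly `G`-equivariant. -/
def EquivFun (ρC : GAct G C) (ρD : GAct G D) (F : C ⥤ D) : Prop :=
  ∀ g : G, ((ρC g).toFunctor : C ⥤ C) ⋙ F = F ⋙ ((ρD g).toFunctor : D ⥤ D)

/-- The `H`-fixed points of a `G`-category: objects fixed by all of `H`. -/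
structure Fixed (ρ : GAct G C) (H : Subgroup G) : Type u where
  obj : C
  fixed : ∀ h ∈ H, (((ρ h).toFunctor : C ⥤ C)).obj obj = obj

instance {ρ : GAct G C} {H : Subgroup G} : Category.{u} (Fixed ρ H) where
  Hom x y := { φ : x.obj ⟶ y.obj //
    ∀ h (hh : h ∈ H), ((ρ h).toFunctor : C ⥤ C).map φ =
      eqToHom (x.fixed h hh) ≫ φ ≫ eqToHom (y.fixed h hh).symm }
  id x := ⟨𝟙 x.obj, by intro h hh; exact ((ρ h).toFunctor.map_id x.obj).trans ((by intros; simp : ∀ {a b : C} (p : b = a), 𝟙 b = eqToHom p ≫ 𝟙 a ≫ eqToHom p.symm) _)⟩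
  comp f g := ⟨f.1 ≫ g.1, by
    intro h hh
    refine ((ρ h).toFunctor.map_comp f.1 g.1).trans ?_
    rw [f.2 h hh, g.2 h hh]
    exact (by intros; simp : ∀ {a a' b b' c c' : C} (pa : a' = a) (pb : b' = b) (pb' : b = b') (pc : c = c')
      (f : a ⟶ b) (g : b ⟶ c), (eqToHom pa ≫ f ≫ eqToHom pb') ≫ eqToHom pb ≫ g ≫ eqToHom pc =
        eqToHom pa ≫ (f ≫ g) ≫ eqToHom pc) _ _ _ _ _ _⟩
  id_comp f := Subtype.ext (by simp)
  comp_id f := Subtype.ext (by simp)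
  assoc f g h := Subtype.ext (by simp)

/-- The functor induced on `H`-fixed points by a strictly equivariant functor. -/
def FixedFunctor (ρC : GAct G C) (ρD : GAct G D) (i : C ⥤ D) (hi : EquivFun ρC ρD i)
    (H : Subgroup G) : Fixed ρC H ⥤ Fixed ρD H where
  obj x := ⟨i.obj x.obj, fun h hh => by
    have := Functor.congr_obj (hi h) x.obj
    exact this.symm.trans (congrArg i.obj (x.fixed h hh))⟩
  map {x y} φ := ⟨i.map φ.1, fun h hh => by
    have h2 := Functor.congr_hom (hi h).symm φ.1
    refine h2.trans ?_
    exact (by intros _ _ _ _ F f _ _ _ _ _ _ hf; simp [hf, eqToHom_map] : ∀ {a b : C} {X Y : D} (F : C ⥤ C)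
      (f : a ⟶ b) {e1 : X = i.obj (F.obj a)} {e4 : i.obj (F.obj b) = Y} {e5 : X = i.obj a}
      {e6 : i.obj b = Y} {e2 : F.obj a = a} {e3 : b = F.obj b}, F.map f = eqToHom e2 ≫ f ≫ eqToHom e3 →
        eqToHom e1 ≫ (F ⋙ i).map f ≫ eqToHom e4 = eqToHom e5 ≫ i.map f ≫ eqToHom e6) _ _ (φ.2 h hh)⟩
  map_id x := Subtype.ext (by exact i.map_id x.obj)
  map_comp f g := Subtype.ext (by exact i.map_comp f.1 g.1)

/-- A functor is a sieve inclusion: fully faithful, injective on objects, and closed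
under precomposition: any morphism of `D` with target in the image lies in the image. -/
structure IsSieve (i : C ⥤ D) : Prop where
  full : i.Full
  faithful : i.Faithful
  injObj : Function.Injective i.obj
  closed : ∀ {c : C} {d : D}, (d ⟶ i.obj c) → ∃ c', i.obj c' = d

/-- A functor is a cosieve inclusion: fully faithful, injective on objects, and closed
under postcomposition: any morphism of `D` with source in the image lies in the image. -/
structure IsCosieve (i : C ⥤ D) : Prop where
  full : i.Full
  faithful : i.Faithful
  injObj : Function.Injective i.obj
  closed : ∀ {c : C} {d : D}, (i.obj c ⟶ d) → ∃ c', i.obj c' = d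

/-- A Dwyer map: a sieve admitting a factorization through a cosieve by a functor
admitting a right adjoint. -/
def IsDwyer (i : C ⥤ D) : Prop :=
  IsSieve i ∧ ∃ (X : Cat.{u, u}) (f : C ⥤ X) (j : X ⥤ D),
    i = f ⋙ j ∧ IsCosieve j ∧ ∃ r : X ⥤ C, Nonempty (f ⊣ r)

/-- A `G`-equivariant Dwyer map: an equivariant sieve admitting an equivariant
factorization through an equivariant cosieve by an equivariant functor admitting a
`G`-equivariant right adjoint (with equivariant unit and counit). -/
def IsGDwyer (ρC : GAct G C) (ρD : GAct G D) (i : C ⥤ D) : Prop :=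
  IsSieve i ∧ EquivFun ρC ρD i ∧
    ∃ (X : Cat.{u, u}) (ρX : GAct G X) (f : C ⥤ X) (j : X ⥤ D),
      i = f ⋙ j ∧ EquivFun ρC ρX f ∧ EquivFun ρX ρD j ∧ IsCosieve j ∧
        ∃ (r : X ⥤ C) (adj : f ⊣ r), EquivFun ρX ρC r ∧
          (∀ (g : G) (c : C),
            HEq (((ρC g).toFunctor : C ⥤ C).map (adj.unit.app c)) (adj.unit.app (((ρC g).toFunctor : C ⥤ C).obj c))) ∧
          (∀ (g : G) (x : X),
            HEq (((ρX g).toFunctor : X ⥤ X).map (adj.counit.app x)) (adj.counit.app (((ρX g).toFunctor : X ⥤ X).obj x)))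

end GGlobal

open GGlobal

namespace CategoryTheory

variable {A B C D : Type*} [Category A] [Category B] [Category C] [Category D]

instance Functor.Full.prod (F : A ⥤ B) (G : C ⥤ D) [F.Full] [G.Full] : (F.prod G).Full where
  map_surjective f :=
    ⟨(F.preimage f.1, G.preimage f.2), Prod.ext (F.map_preimage _) (G.map_preimage _)⟩

instance Functor.Faithful.prod (F : A ⥤ B) (G : C ⥤ D) [F.Faithful] [G.Faithful] :
    (F.prod G).Faithful where
  map_injective {_ _} {f g} h :=
    have h' : (F.map f.1, G.map f.2) = (F.map g.1, G.map g.2) := h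
    Prod.ext (F.map_injective (Prod.ext_iff.1 h').1) (G.map_injective (Prod.ext_iff.1 h').2)

def Adjunction.prod {F : A ⥤ B} {G : B ⥤ A} {F' : C ⥤ D} {G' : D ⥤ C}
    (adj : F ⊣ G) (adj' : F' ⊣ G') : F.prod F' ⊣ G.prod G' where
  unit := NatTrans.prod adj.unit adj'.unit
  counit := NatTrans.prod adj.counit adj'.counit
  left_triangle_components X :=
    Prod.ext (adj.left_triangle_components X.1) (adj'.left_triangle_components X.2)
  right_triangle_components X :=
    Prod.ext (adj.right_triangle_components X.1) (adj'.right_triangle_components X.2)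

end CategoryTheory

theorem Prod.mk_heq_mk {α α' β β' : Type _} {a : α} {a' : α'} {b : β} {b' : β'}
    (ha : HEq a a') (hb : HEq b b') : HEq (a, b) (a', b') := by
  cases ha; cases hb; rfl

namespace GGlobal

variable {G : Type u} [Group G] {A B C D : Type u}
  [Category.{u} A] [Category.{u} B] [Category.{u} C] [Category.{u} D]

def prodGAct (ρA : GAct G A) (ρC : GAct G C) : GAct G (A × C) where
  toFun g := ((ρA g).toFunctor.prod (ρC g).toFunctor).toCatHom
  map_one' := by
    simp only [map_one]
    rfl
  map_mul' g h := by
    simp only [map_mul]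
    rfl

theorem eq_prodGAct {ρA : GAct G A} {ρC : GAct G C} {ρ : GAct G (A × C)}
    (h : ∀ g, (ρ g).toFunctor = (ρA g).toFunctor.prod (ρC g).toFunctor) :
    ρ = prodGAct ρA ρC :=
  MonoidHom.ext fun g => Cat.Hom.ext (h g)

theorem EquivFun.id (ρ : GAct G C) : EquivFun ρ ρ (𝟭 C) := fun _ => rfl

theorem EquivFun.prod {ρA : GAct G A} {ρB : GAct G B} {ρC : GAct G C} {ρD : GAct G D}
    {F : A ⥤ B} {F' : C ⥤ D} (hF : EquivFun ρA ρB F) (hF' : EquivFun ρC ρD F') :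
    EquivFun (prodGAct ρA ρC) (prodGAct ρB ρD) (F.prod F') := fun g =>
  congrArg₂ Functor.prod (hF g) (hF' g)

theorem IsSieve.id : IsSieve (𝟭 C) :=
  ⟨inferInstance, inferInstance, Function.injective_id, fun {_ d} _ => ⟨d, rfl⟩⟩

theorem IsSieve.prod {F : A ⥤ B} {F' : C ⥤ D} (hF : IsSieve F) (hF' : IsSieve F') :
    IsSieve (F.prod F') :=
  have := hF.full; have := hF.faithful; have := hF'.full; have := hF'.faithful
  ⟨inferInstance, inferInstance, hF.injObj.prodMap hF'.injObj, fun φ =>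
    have ⟨a, ha⟩ := hF.closed φ.1
    have ⟨c, hc⟩ := hF'.closed φ.2
    ⟨(a, c), Prod.ext ha hc⟩⟩

theorem IsCosieve.id : IsCosieve (𝟭 C) :=
  ⟨inferInstance, inferInstance, Function.injective_id, fun {_ d} _ => ⟨d, rfl⟩⟩

theorem IsCosieve.prod {F : A ⥤ B} {F' : C ⥤ D} (hF : IsCosieve F) (hF' : IsCosieve F') :
    IsCosieve (F.prod F') :=
  have := hF.full; have := hF.faithful; have := hF'.full; have := hF'.faithful
  ⟨inferInstance, inferInstance, hF.injObj.prodMap hF'.injObj, fun φ =>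
    have ⟨a, ha⟩ := hF.closed φ.1
    have ⟨c, hc⟩ := hF'.closed φ.2
    ⟨(a, c), Prod.ext ha hc⟩⟩

def NatTrans.IsEquivariant (ρC : GAct G C) (ρD : GAct G D) {F F' : C ⥤ D} (α : F ⟶ F') :
    Prop :=
  ∀ (g : G) (c : C), HEq ((ρD g).toFunctor.map (α.app c)) (α.app ((ρC g).toFunctor.obj c))

theorem NatTrans.IsEquivariant.id {ρC : GAct G C} {ρD : GAct G D} {F : C ⥤ D}
    (hF : EquivFun ρC ρD F) : NatTrans.IsEquivariant ρC ρD (𝟙 F) := fun g c =>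
  (heq_of_eq ((ρD g).toFunctor.map_id (F.obj c))).trans
    (congr_arg_heq (fun d => 𝟙 d) (Functor.congr_obj (hF g) c).symm)

theorem NatTrans.IsEquivariant.prod {ρA : GAct G A} {ρB : GAct G B} {ρC : GAct G C}
    {ρD : GAct G D} {F F' : A ⥤ B} {H H' : C ⥤ D} {α : F ⟶ F'} {β : H ⟶ H'}
    (hα : NatTrans.IsEquivariant ρA ρB α) (hβ : NatTrans.IsEquivariant ρC ρD β) :
    NatTrans.IsEquivariant (prodGAct ρA ρC) (prodGAct ρB ρD) (NatTrans.prod α β) :=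
  fun g x => Prod.mk_heq_mk (hα g x.1) (hβ g x.2)

end GGlobal

/-- If `i : C → D` is a `G`-equivariant Dwyer map and `S` is any small `G`-category,
then `S × i : S × C → S × D` (with the diagonal `G`-actions on the products) is a
`G`-equivariant Dwyer map. -/
theorem prod_isGDwyer
    {G : Type u} [Group G] {S C D : Type u}
    [Category.{u} S] [Category.{u} C] [Category.{u} D]
    (ρS : GAct G S) (ρC : GAct G C) (ρD : GAct G D)
    (i : C ⥤ D) (hDwyer : IsGDwyer ρC ρD i)
    (ρSC : GAct G (S × C)) (ρSD : GAct G (S × D))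
    (hSC : ∀ g : G, ((ρSC g).toFunctor : S × C ⥤ S × C) = ((ρS g).toFunctor : S ⥤ S).prod ((ρC g).toFunctor : C ⥤ C))
    (hSD : ∀ g : G, ((ρSD g).toFunctor : S × D ⥤ S × D) = ((ρS g).toFunctor : S ⥤ S).prod ((ρD g).toFunctor : D ⥤ D)) :
    IsGDwyer ρSC ρSD ((𝟭 S).prod i) := by
  obtain ⟨hi, hiG, X, ρX, f, j, rfl, hf, hj, hj', r, adj, hr, hunit, hcounit⟩ := hDwyer
  obtain rfl := eq_prodGAct hSC
  obtain rfl := eq_prodGAct hSD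
  have hS := EquivFun.id ρS
  exact ⟨IsSieve.id.prod hi, hS.prod hiG, Cat.of (S × X), prodGAct ρS ρX, (𝟭 S).prod f,
    (𝟭 S).prod j, rfl, hS.prod hf, hS.prod hj, IsCosieve.id.prod hj', (𝟭 S).prod r,
    Adjunction.id.prod adj, hS.prod hr, (NatTrans.IsEquivariant.id hS).prod hunit,
    (NatTrans.IsEquivariant.id hS).prod hcounit⟩
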